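/- Let θ₁, θ₂ be commuting measure-preserving transformations of a probability space (Ω, P) and A a measurable set with P(A) > 0. Then liminf_{n→∞} (1/n) Σ_{i=1}^{n} P(A ∩ θ₁^{-i} A ∩ θ₂^{-i} A) > 0. -/

import Mathlib

/-!
For `x ∈ Ω` let `S x = {(u, v) | θ₁^[u] (θ₂^[v] x) ∈ A} ⊆ ℕ²`. A corner
`a, a + (e, 0), a + (0, e)` of `S x` with `e > 0` says exactly that
`θ₁^[a.1] (θ₂^[a.2] x) ∈ A ∩ θ₁^[e] ⁻¹' A ∩ θ₂^[e] ⁻¹' A`, so by measure preservation the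
expected number of such corners in a box is a multiple of
`∑ e ≤ N, P (A ∩ θ₁^[e] ⁻¹' A ∩ θ₂^[e] ⁻¹' A)`.

Counting the splittings `p + q = t` gives
`#(S x ∩ [0, N)²)² ≤ ∑ t, #{p ∈ S x ∩ [0, N)² | t - p ∈ S x}`, and by the corners theorem each
set on the right is either sparse or contains a corner. That corner may have negative side, but
then its reflection through `t` is a positive corner of `S x`. Integrating over `x` (the left side
has mean at least `(N² P A)²` by Cauchy–Schwarz) yields `∑ e ≤ N, P (…) ≥ P(A)² / (32 N²)` with
`N` depending only on `P A`. Applying this to `θ₁^[h], θ₂^[h]` for every `h`, and using that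
`h ↦ h * e` is injective, bounds the Cesàro averages below.
-/

open MeasureTheory Filter Finset
open scoped ENNReal

lemma cornersTheoremBound_pos (ε : ℝ) : 0 < cornersTheoremBound ε :=
  Nat.succ_pos _

section Corners

open scoped Classical

variable (S : Set (ℕ × ℕ)) (M N : ℕ)

noncomputable def positiveCorners : Finset ((ℕ × ℕ) × ℕ) :=
  {r ∈ (range M ×ˢ range M) ×ˢ Icc 1 N | r.1 ∈ S ∧ r.1 + (r.2, 0) ∈ S ∧ r.1 + (0, r.2) ∈ S}

noncomputable def summands (t : ℕ × ℕ) : Finset (ℕ × ℕ) :=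
  {p ∈ range N ×ˢ range N | p ∈ S ∧ ∃ q ∈ S, p + q = t}

variable {S N}

lemma positiveCorners_nonempty_of_isCorner {t : ℕ × ℕ} (ht : t ∈ range (2 * N) ×ˢ range (2 * N))
    {x₁ y₁ x₂ y₂ : ℕ} (hc : IsCorner (summands S N t : Set (ℕ × ℕ)) x₁ y₁ x₂ y₂) (hne : x₁ ≠ x₂) :
    (positiveCorners S (2 * N) N).Nonempty := by
  obtain ⟨h₁₁, h₁₂, h₂₁, hsum⟩ := hc
  simp only [summands, coe_filter, Set.mem_ofPred_eq, mem_product, mem_range] at h₁₁ h₁₂ h₂₁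
  simp only [mem_product, mem_range] at ht
  obtain ⟨⟨hx₁, hy₁⟩, hS₁₁, q₁₁, hq₁₁, hq₁₁t⟩ := h₁₁
  obtain ⟨⟨-, hy₂⟩, hS₁₂, q₁₂, hq₁₂, hq₁₂t⟩ := h₁₂
  obtain ⟨⟨hx₂, -⟩, hS₂₁, q₂₁, hq₂₁, hq₂₁t⟩ := h₂₁
  simp only [positiveCorners, Finset.Nonempty, mem_filter, mem_product, mem_range, mem_Icc]
  rcases Nat.lt_or_gt_of_ne hne with hlt | hgt
  · refine ⟨((x₁, y₁), x₂ - x₁), ?_⟩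
    dsimp only
    refine ⟨⟨⟨by omega, by omega⟩, by omega, by omega⟩, hS₁₁, ?_, ?_⟩
    · convert hS₂₁ using 1; ext <;> simp only [Prod.fst_add, Prod.snd_add] <;> omega
    · convert hS₁₂ using 1; ext <;> simp only [Prod.fst_add, Prod.snd_add] <;> omega
  · -- reflect the corner through `t`
    rw [Prod.ext_iff] at hq₁₁t hq₁₂t hq₂₁t
    simp only [Prod.fst_add, Prod.snd_add] at hq₁₁t hq₁₂t hq₂₁t
    refine ⟨(q₁₁, x₁ - x₂), ?_⟩
    dsimp only
    refine ⟨⟨⟨by omega, by omega⟩, by omega, by omega⟩, hq₁₁, ?_, ?_⟩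
    · convert hq₂₁ using 1; ext <;> simp only [Prod.fst_add, Prod.snd_add] <;> omega
    · convert hq₁₂ using 1; ext <;> simp only [Prod.fst_add, Prod.snd_add] <;> omega

lemma sq_card_le_sum_card_summands :
    #{p ∈ range N ×ˢ range N | p ∈ S} ^ 2 ≤
      ∑ t ∈ range (2 * N) ×ˢ range (2 * N), #(summands S N t) := by
  set B := {p ∈ range N ×ˢ range N | p ∈ S}
  have hB : ∀ p ∈ B, p.1 < N ∧ p.2 < N ∧ p ∈ S := by
    intro p hp
    simp only [B, mem_filter, mem_product, mem_range] at hp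
    exact ⟨hp.1.1, hp.1.2, hp.2⟩
  calc #B ^ 2 = ∑ p ∈ B, #(B.image (p + ·)) := by
        simp only [card_image_of_injective _ (add_right_injective _), sum_const, smul_eq_mul, sq]
    _ ≤ ∑ p ∈ B, #{t ∈ range (2 * N) ×ˢ range (2 * N) | ∃ q ∈ S, p + q = t} := by
        refine sum_le_sum fun p hp => card_le_card fun t ht => ?_
        obtain ⟨q, hq, rfl⟩ := mem_image.1 ht
        obtain ⟨hp₁, hp₂, -⟩ := hB p hp
        obtain ⟨hq₁, hq₂, hqS⟩ := hB q hq
        simp only [mem_filter, mem_product, mem_range, Prod.fst_add, Prod.snd_add]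
        exact ⟨⟨by omega, by omega⟩, q, hqS, rfl⟩
    _ = ∑ t ∈ range (2 * N) ×ˢ range (2 * N), #(summands S N t) := by
        simp only [summands, B, card_filter, sum_filter]
        rw [sum_comm (s := range (2 * N) ×ˢ range (2 * N))]
        refine sum_congr rfl fun p _ => ?_
        by_cases hp : p ∈ S <;> simp [hp]


variable {ε : ℝ}

lemma card_summands_le (hε : 0 < ε) (hN : cornersTheoremBound (ε / 9) ≤ N) {t : ℕ × ℕ}
    (ht : t ∈ range (2 * N) ×ˢ range (2 * N)) :
    (#(summands S N t) : ℝ) ≤ N ^ 2 * (ε + #(positiveCorners S (2 * N) N)) := by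
  by_cases hdense : ε * N ^ 2 ≤ #(summands S N t)
  · have hcorner := corners_theorem_nat hε hN _ (filter_subset _ _) hdense
    simp only [IsCornerFree, not_forall] at hcorner
    obtain ⟨x₁, y₁, x₂, y₂, hc, hne⟩ := hcorner
    have hK : (1 : ℝ) ≤ #(positiveCorners S (2 * N) N) := by
      exact_mod_cast (positiveCorners_nonempty_of_isCorner ht hc hne).card_pos
    have hcard : (#(summands S N t) : ℝ) ≤ N ^ 2 := by
      have := card_le_card
        (filter_subset (fun p => p ∈ S ∧ ∃ q ∈ S, p + q = t) (range N ×ˢ range N))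
      rw [card_product, card_range] at this
      exact_mod_cast this.trans_eq (sq N).symm
    nlinarith
  · nlinarith

lemma sq_card_le_of_cornersTheoremBound (hε : 0 < ε) (hN : cornersTheoremBound (ε / 9) ≤ N) :
    (#{p ∈ range N ×ˢ range N | p ∈ S} : ℝ) ^ 2 ≤
      4 * N ^ 4 * (ε + #(positiveCorners S (2 * N) N)) := by
  calc (#{p ∈ range N ×ˢ range N | p ∈ S} : ℝ) ^ 2
      ≤ ∑ t ∈ range (2 * N) ×ˢ range (2 * N), (#(summands S N t) : ℝ) := by
        exact_mod_cast sq_card_le_sum_card_summands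
    _ ≤ ∑ t ∈ range (2 * N) ×ˢ range (2 * N), (N ^ 2 * (ε + #(positiveCorners S (2 * N) N)) : ℝ) :=
        sum_le_sum fun t ht => card_summands_le hε hN ht
    _ = 4 * N ^ 4 * (ε + #(positiveCorners S (2 * N) N)) := by
        rw [sum_const, card_product, card_range, nsmul_eq_mul]
        push_cast
        ring

end Corners

section CountingFunctions

open scoped Classical

variable {Ω ι : Type*} {R : Finset ι} {U : ι → Set Ω}

lemma card_filter_mem_eq_sum_indicator (R : Finset ι) (U : ι → Set Ω) (x : Ω) :
    (#{r ∈ R | x ∈ U r} : ℝ) = ∑ r ∈ R, (U r).indicator 1 x := by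
  rw [card_filter]
  push_cast
  exact sum_congr rfl fun r _ => by simp [Set.indicator_apply]

variable [MeasurableSpace Ω] {μ : Measure Ω}

lemma memLp_card_filter_mem [IsFiniteMeasure μ] (hU : ∀ r, MeasurableSet (U r)) (p : ℝ≥0∞) :
    MemLp (fun x => (#{r ∈ R | x ∈ U r} : ℝ)) p μ := by
  simp only [card_filter_mem_eq_sum_indicator]
  exact memLp_finsetSum R fun r _ =>
    memLp_indicator_const p (hU r) (1 : ℝ) (Or.inr (measure_ne_top μ _))

lemma integral_card_filter_mem [IsFiniteMeasure μ] (hU : ∀ r, MeasurableSet (U r)) :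
    ∫ x, (#{r ∈ R | x ∈ U r} : ℝ) ∂μ = ∑ r ∈ R, μ.real (U r) := by
  simp only [card_filter_mem_eq_sum_indicator]
  rw [integral_finsetSum _ fun r _ => (integrable_const 1).indicator (hU r)]
  exact sum_congr rfl fun r _ => integral_indicator_one (hU r)

end CountingFunctions

lemma sq_integral_le_integral_sq {Ω : Type*} [MeasurableSpace Ω] {μ : Measure Ω}
    [IsProbabilityMeasure μ] {X : Ω → ℝ} (hX : MemLp X 2 μ) :
    (∫ x, X x ∂μ) ^ 2 ≤ ∫ x, X x ^ 2 ∂μ := by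
  have := ProbabilityTheory.variance_nonneg X μ
  rw [ProbabilityTheory.variance_eq_sub hX] at this
  simpa [sub_nonneg] using this

section JointIterates

variable {Ω : Type*} (ψ₁ ψ₂ : Ω → Ω)

def jointIterate (p : ℕ × ℕ) : Ω → Ω := ψ₁^[p.1] ∘ ψ₂^[p.2]

variable {ψ₁ ψ₂}

lemma jointIterate_add_fst (p : ℕ × ℕ) (e : ℕ) :
    jointIterate ψ₁ ψ₂ (p + (e, 0)) = ψ₁^[e] ∘ jointIterate ψ₁ ψ₂ p := by
  simp only [jointIterate, Prod.fst_add, Prod.snd_add, add_zero, add_comm p.1,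
    Function.iterate_add, Function.comp_assoc]

lemma jointIterate_add_snd (hc : Function.Commute ψ₁ ψ₂) (p : ℕ × ℕ) (e : ℕ) :
    jointIterate ψ₁ ψ₂ (p + (0, e)) = ψ₂^[e] ∘ jointIterate ψ₁ ψ₂ p := by
  simp only [jointIterate, Prod.fst_add, Prod.snd_add, add_zero, add_comm p.2,
    Function.iterate_add, ← Function.comp_assoc, ((hc.iterate_left p.1).iterate_right e).comp_eq]

variable [MeasurableSpace Ω] {μ : Measure Ω}

lemma MeasureTheory.MeasurePreserving.jointIterate (h₁ : MeasurePreserving ψ₁ μ μ)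
    (h₂ : MeasurePreserving ψ₂ μ μ) (p : ℕ × ℕ) :
    MeasurePreserving (_root_.jointIterate ψ₁ ψ₂ p) μ μ :=
  (h₁.iterate p.1).comp (h₂.iterate p.2)

end JointIterates

section Recurrence

open scoped Classical

variable {Ω : Type*} [MeasurableSpace Ω] {μ : Measure Ω} [IsFiniteMeasure μ] {ψ₁ ψ₂ : Ω → Ω}
  {A : Set Ω}

lemma integral_card_visits (h₁ : MeasurePreserving ψ₁ μ μ) (h₂ : MeasurePreserving ψ₂ μ μ)
    (hA : MeasurableSet A) (N : ℕ) :
    ∫ x, (#{p ∈ range N ×ˢ range N | p ∈ {p | jointIterate ψ₁ ψ₂ p x ∈ A}} : ℝ) ∂μ =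
      N ^ 2 * μ.real A := by
  calc _ = ∑ p ∈ range N ×ˢ range N, μ.real (jointIterate ψ₁ ψ₂ p ⁻¹' A) :=
        integral_card_filter_mem fun p => (h₁.jointIterate h₂ p).measurable hA
    _ = N ^ 2 * μ.real A := by
        simp only [(h₁.jointIterate h₂ _).measureReal_preimage hA.nullMeasurableSet, sum_const,
          card_product, card_range, nsmul_eq_mul]
        push_cast
        ring

omit [MeasurableSpace Ω] [IsFiniteMeasure μ] in
lemma positiveCorners_jointIterate_eq (hc : Function.Commute ψ₁ ψ₂) (M N : ℕ) (x : Ω) :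
    positiveCorners {p | jointIterate ψ₁ ψ₂ p x ∈ A} M N =
      {r ∈ (range M ×ˢ range M) ×ˢ Icc 1 N |
        x ∈ jointIterate ψ₁ ψ₂ r.1 ⁻¹' (A ∩ ψ₁^[r.2] ⁻¹' A ∩ ψ₂^[r.2] ⁻¹' A)} := by
  refine filter_congr fun r _ => ?_
  simp only [Set.mem_ofPred_eq, Set.mem_preimage, Set.mem_inter_iff, jointIterate_add_fst,
    jointIterate_add_snd hc, Function.comp_apply, and_assoc]

lemma integral_card_positiveCorners (h₁ : MeasurePreserving ψ₁ μ μ)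
    (h₂ : MeasurePreserving ψ₂ μ μ) (hc : Function.Commute ψ₁ ψ₂) (hA : MeasurableSet A)
    (M N : ℕ) :
    ∫ x, (#(positiveCorners {p | jointIterate ψ₁ ψ₂ p x ∈ A} M N) : ℝ) ∂μ =
      M ^ 2 * ∑ e ∈ Icc 1 N, μ.real (A ∩ ψ₁^[e] ⁻¹' A ∩ ψ₂^[e] ⁻¹' A) := by
  set G : ℕ → Set Ω := fun e => A ∩ ψ₁^[e] ⁻¹' A ∩ ψ₂^[e] ⁻¹' A
  have hG : ∀ e, MeasurableSet (G e) := fun e =>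
    (hA.inter ((h₁.iterate e).measurable hA)).inter ((h₂.iterate e).measurable hA)
  simp only [positiveCorners_jointIterate_eq hc]
  calc _ = ∑ r ∈ (range M ×ˢ range M) ×ˢ Icc 1 N, μ.real (jointIterate ψ₁ ψ₂ r.1 ⁻¹' G r.2) :=
        integral_card_filter_mem fun r => (h₁.jointIterate h₂ r.1).measurable (hG r.2)
    _ = M ^ 2 * ∑ e ∈ Icc 1 N, μ.real (G e) := by
        simp only [(h₁.jointIterate h₂ _).measureReal_preimage (hG _).nullMeasurableSet,
          sum_product, sum_const, card_product, card_range, nsmul_eq_mul]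
        push_cast
        ring

lemma sq_measureReal_le_of_cornersTheoremBound [IsProbabilityMeasure μ]
    (h₁ : MeasurePreserving ψ₁ μ μ) (h₂ : MeasurePreserving ψ₂ μ μ) (hc : Function.Commute ψ₁ ψ₂)
    (hA : MeasurableSet A) {ε : ℝ} (hε : 0 < ε) {N : ℕ} (hN : cornersTheoremBound (ε / 9) ≤ N) :
    μ.real A ^ 2 ≤
      4 * ε + 16 * N ^ 2 * ∑ e ∈ Icc 1 N, μ.real (A ∩ ψ₁^[e] ⁻¹' A ∩ ψ₂^[e] ⁻¹' A) := by
  set S : Ω → Set (ℕ × ℕ) := fun x => {p | jointIterate ψ₁ ψ₂ p x ∈ A}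
  set f : Ω → ℝ := fun x => #{p ∈ range N ×ˢ range N | p ∈ S x}
  set K : Ω → ℝ := fun x => #(positiveCorners (S x) (2 * N) N)
  have hf : MemLp f 2 μ := memLp_card_filter_mem (U := fun p => jointIterate ψ₁ ψ₂ p ⁻¹' A)
    (fun p => (h₁.jointIterate h₂ p).measurable hA) 2
  have hK : Integrable K μ := by
    simp only [K, S, positiveCorners_jointIterate_eq hc]
    refine memLp_one_iff_integrable.1 (memLp_card_filter_mem (fun r => ?_) 1)
    exact (h₁.jointIterate h₂ r.1).measurable
      ((hA.inter ((h₁.iterate r.2).measurable hA)).inter ((h₂.iterate r.2).measurable hA))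
  have hN4 : (0 : ℝ) < N ^ 4 := by
    have := (cornersTheoremBound_pos (ε / 9)).trans_le hN
    positivity
  have key : ((N : ℝ) ^ 2 * μ.real A) ^ 2 ≤
      4 * N ^ 4 * (ε + (2 * N) ^ 2 * ∑ e ∈ Icc 1 N, μ.real (A ∩ ψ₁^[e] ⁻¹' A ∩ ψ₂^[e] ⁻¹' A)) :=
    calc ((N : ℝ) ^ 2 * μ.real A) ^ 2 = (∫ x, f x ∂μ) ^ 2 := by
          rw [integral_card_visits h₁ h₂ hA]
      _ ≤ ∫ x, f x ^ 2 ∂μ := sq_integral_le_integral_sq hf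
      _ ≤ ∫ x, 4 * N ^ 4 * (ε + K x) ∂μ :=
          integral_mono hf.integrable_sq (((integrable_const ε).add hK).const_mul _)
            fun x => sq_card_le_of_cornersTheoremBound hε hN
      _ = 4 * N ^ 4 * (ε + ∫ x, K x ∂μ) := by
          rw [integral_const_mul, integral_add (integrable_const ε) hK, integral_const]
          simp
      _ = _ := by
          rw [integral_card_positiveCorners h₁ h₂ hc hA]
          push_cast
          ring
  refine le_of_mul_le_mul_left ?_ hN4
  nlinarith [key]

end Recurrence

section Cesaro

variable {f : ℕ → ℝ}

lemma sum_Icc_comp_mul_le (hf : ∀ i, 0 ≤ f i) {e H n : ℕ} (he : 0 < e) (hHn : H * e ≤ n) :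
    ∑ h ∈ Icc 1 H, f (h * e) ≤ ∑ i ∈ Icc 1 n, f i := by
  rw [← sum_image fun a _ b _ hab => Nat.eq_of_mul_eq_mul_right he hab]
  refine sum_le_sum_of_subset_of_nonneg (fun i hi => ?_) fun i _ _ => hf i
  obtain ⟨h, hh, rfl⟩ := mem_image.1 hi
  rw [mem_Icc] at hh ⊢
  constructor <;> nlinarith

lemma div_le_cesaro_of_le_sum_mul (hf : ∀ i, 0 ≤ f i) {c : ℝ} (hc0 : 0 ≤ c) {N : ℕ} (hN : 0 < N)
    (hc : ∀ h, 1 ≤ h → c ≤ ∑ e ∈ Icc 1 N, f (h * e)) {n : ℕ} (hn : N ≤ n) :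
    c / (2 * N ^ 2) ≤ (∑ i ∈ Icc 1 n, f i) / n := by
  set H := n / N
  have hH : 1 ≤ H := (Nat.le_div_iff_mul_le hN).2 (by omega)
  have hHn : H * N ≤ n := Nat.div_mul_le_self n N
  have hnH : (n : ℝ) ≤ 2 * N * H := by
    have hlt : n < N * (H + 1) := Nat.lt_mul_div_succ n hN
    exact_mod_cast (show n ≤ 2 * N * H by nlinarith)
  have hsum : H * c ≤ N * ∑ i ∈ Icc 1 n, f i :=
    calc (H : ℝ) * c = ∑ _h ∈ Icc 1 H, c := by simp
      _ ≤ ∑ h ∈ Icc 1 H, ∑ e ∈ Icc 1 N, f (h * e) :=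
          sum_le_sum fun h hh => hc h (mem_Icc.1 hh).1
      _ = ∑ e ∈ Icc 1 N, ∑ h ∈ Icc 1 H, f (h * e) := sum_comm
      _ ≤ ∑ _e ∈ Icc 1 N, ∑ i ∈ Icc 1 n, f i := sum_le_sum fun e he =>
          sum_Icc_comp_mul_le hf (mem_Icc.1 he).1
            ((Nat.mul_le_mul_left H (mem_Icc.1 he).2).trans hHn)
      _ = N * ∑ i ∈ Icc 1 n, f i := by simp
  have hn0 : (0 : ℝ) < n := by exact_mod_cast hN.trans_le hn
  rw [div_le_div_iff₀ (by positivity) hn0]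
  nlinarith

lemma liminf_cesaro_pos_of_le_sum_mul (hf : ∀ i, 0 ≤ f i) {b : ℝ} (hb : ∀ i, f i ≤ b) {c : ℝ}
    (hc0 : 0 < c) {N : ℕ} (hN : 0 < N) (hc : ∀ h, 1 ≤ h → c ≤ ∑ e ∈ Icc 1 N, f (h * e)) :
    0 < liminf (fun n : ℕ => (∑ i ∈ Icc 1 n, f i) / n) atTop := by
  have hb0 : 0 ≤ b := (hf 0).trans (hb 0)
  have hcobdd : IsCoboundedUnder (· ≥ ·) atTop fun n : ℕ => (∑ i ∈ Icc 1 n, f i) / n := by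
    refine (isBoundedUnder_of
      ⟨b, fun n => div_le_of_le_mul₀ n.cast_nonneg hb0 ?_⟩).isCoboundedUnder_ge
    calc ∑ i ∈ Icc 1 n, f i ≤ ∑ _i ∈ Icc 1 n, b := sum_le_sum fun i _ => hb i
      _ = b * n := by simp [mul_comm]
  calc 0 < c / (2 * N ^ 2) := by positivity
    _ ≤ _ := le_liminf_of_le hcobdd (eventually_atTop.2
        ⟨N, fun n hn => div_le_cesaro_of_le_sum_mul hf hc0.le hN hc hn⟩)

end Cesaro

/-- Furstenberg–Katznelson multiple recurrence for two commuting measure-preserving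
transformations: if `P(A) > 0` then the Cesàro averages of
`P(A ∩ θ₁⁻ⁱA ∩ θ₂⁻ⁱA)` have positive liminf. -/
theorem furstenberg_katznelson_two {Ω : Type*} [MeasurableSpace Ω]
    (P : Measure Ω) [IsProbabilityMeasure P]
    (θ₁ θ₂ : Ω → Ω)
    (h₁ : MeasurePreserving θ₁ P P) (h₂ : MeasurePreserving θ₂ P P)
    (hcomm : θ₁ ∘ θ₂ = θ₂ ∘ θ₁)
    (A : Set Ω) (hA : MeasurableSet A) (hpos : 0 < P A) :
    0 < liminf (fun n : ℕ =>
        (∑ i ∈ Finset.Icc 1 n, (P (A ∩ θ₁^[i] ⁻¹' A ∩ θ₂^[i] ⁻¹' A)).toReal) / n)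
      atTop := by
  have hδ : 0 < P.real A := ENNReal.toReal_pos hpos.ne' (measure_ne_top P A)
  set ε := P.real A ^ 2 / 8 with hε
  set N := cornersTheoremBound (ε / 9)
  have hN : 0 < N := cornersTheoremBound_pos _
  refine liminf_cesaro_pos_of_le_sum_mul (fun i => measureReal_nonneg) (fun i => measureReal_le_one)
    (c := P.real A ^ 2 / (32 * N ^ 2)) (by positivity) hN fun h _ => ?_
  have hcomm_h : Function.Commute θ₁^[h] θ₂^[h] :=
    (Function.Commute.iterate_left (fun x => congrFun hcomm x) h).iterate_right h
  have key := sq_measureReal_le_of_cornersTheoremBound (h₁.iterate h) (h₂.iterate h) hcomm_h hA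
    (ε := ε) (N := N) (by positivity) le_rfl
  simp only [← Function.iterate_mul] at key
  simp only [← measureReal_def]
  rw [div_le_iff₀ (by positivity)]
  linarith
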